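/- arXiv:1209.1360 — 2 statements merged into one kernel-verified Lean document; each statement's English description precedes it below -/
import Mathlib

section
/- Let c_1, …, c_T be a simplex coding in ℝ^{T−1}, T ≥ 2, let ρ_1, …, ρ_T be nonnegative reals with ∑_{y=1}^T ρ_y = 1, and let b satisfy ρ_b = max_y ρ_y. Define the SC-SVM conditional risk C(α) = ∑_{y=1}^T ρ_y ∑_{y' ≠ y} max(0, 1/(T−1) + ⟨c_{y'}, α⟩). Then for every α ∈ ℝ^{T−1} and every label D(α) with ⟨c_{D(α)}, α⟩ = max_y ⟨c_y, α⟩, the pointwise comparison inequality holds with constant T−1 and exponent 1: ρ_b − ρ_{D(α)} ≤ (T−1) (C(α) − C(c_b)). -/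
/-!
Since `∑ ρ = 1`, the risk is `C β = ∑ y, (1 - ρ y) · h (⟪c y, β⟫)` with the hinge
`h t = max 0 (s + t)`, `s = 1/(T-1)`. At the codeword `c b` only the hinge of label `b` is
active, so `C (c b) = (1 - ρ b)(s + 1)`. At an arbitrary `α` the scores `⟪c y, α⟫` sum to `0`,
so the hinges sum to at least `T s` and the top score `⟪c D, α⟫` is nonnegative; writing
`1 - ρ y = (1 - ρ b) + (ρ b - ρ y)` gives `C α ≥ (1 - ρ b) T s + (ρ b - ρ D) s`, i.e.
`C α - C (c b) ≥ (ρ b - ρ D) s` because `T s = s + 1`.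
-/

open scoped RealInnerProductSpace
open Finset

section Weights

variable {ι : Type*} [Fintype ι]

theorem sum_mul_sum_erase_of_sum_eq_one {R : Type*} [CommRing R] [DecidableEq ι]
    (ρ f : ι → R) (hρ : ∑ i, ρ i = 1) :
    ∑ i, ρ i * ∑ j ∈ univ.erase i, f j = ∑ i, (1 - ρ i) * f i := by
  simp only [sum_erase_eq_sub (mem_univ _), mul_sub, sub_mul, one_mul, sum_sub_distrib,
    ← sum_mul, hρ, one_mul]

theorem nonneg_of_sum_eq_zero_of_forall_le {x : ι → ℝ} (hx : ∑ i, x i = 0) {d : ι}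
    (hd : ∀ i, x i ≤ x d) : 0 ≤ x d := by
  have hsum : ∑ i, x i ≤ Fintype.card ι * x d := by
    simpa using sum_le_card_nsmul univ x (x d) fun i _ => hd i
  have hcard : (0 : ℝ) < Fintype.card ι := by
    exact_mod_cast Fintype.card_pos_iff.mpr ⟨d⟩
  exact nonneg_of_mul_nonneg_right (hx ▸ hsum) hcard

theorem card_mul_le_sum_max_zero_add {x : ι → ℝ} (hx : ∑ i, x i = 0) (s : ℝ) :
    Fintype.card ι * s ≤ ∑ i, max 0 (s + x i) :=
  calc Fintype.card ι * s = ∑ i, (s + x i) := by simp [sum_add_distrib, hx]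
    _ ≤ ∑ i, max 0 (s + x i) := sum_le_sum fun i _ => le_max_right _ _

theorem le_sum_one_sub_mul_max_zero_add {ρ x : ι → ℝ} {s : ℝ}
    (hx : ∑ i, x i = 0) {b d : ι} (hb : ∀ i, ρ i ≤ ρ b) (hb1 : ρ b ≤ 1)
    (hd : ∀ i, x i ≤ x d) :
    (1 - ρ b) * (Fintype.card ι * s) + (ρ b - ρ d) * s
      ≤ ∑ i, (1 - ρ i) * max 0 (s + x i) := by
  have hcard := mul_le_mul_of_nonneg_left (card_mul_le_sum_max_zero_add hx s)
    (sub_nonneg.mpr hb1)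
  have hd_hinge : s ≤ max 0 (s + x d) :=
    le_max_of_le_right (le_add_of_nonneg_right (nonneg_of_sum_eq_zero_of_forall_le hx hd))
  have hgap : (ρ b - ρ d) * max 0 (s + x d) ≤ ∑ i, (ρ b - ρ i) * max 0 (s + x i) :=
    single_le_sum (f := fun i => (ρ b - ρ i) * max 0 (s + x i))
      (fun i _ => mul_nonneg (sub_nonneg.mpr (hb i)) (le_max_left _ _)) (mem_univ d)
  have hsplit : ∑ i, (1 - ρ i) * max 0 (s + x i)
      = (1 - ρ b) * ∑ i, max 0 (s + x i) + ∑ i, (ρ b - ρ i) * max 0 (s + x i) := by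
    rw [mul_sum, ← sum_add_distrib]
    exact sum_congr rfl fun i _ => by ring
  linarith [mul_le_mul_of_nonneg_left hd_hinge (sub_nonneg.mpr (hb d))]

end Weights

section Codewords

variable {ι E : Type*} [NormedAddCommGroup E] [InnerProductSpace ℝ E] {c : ι → E} {s : ℝ}

theorem max_zero_add_inner_eq_ite [DecidableEq ι] (hs : 0 ≤ s) (hnorm : ∀ y, ‖c y‖ = 1)
    (hinner : ∀ y y', y ≠ y' → ⟪c y, c y'⟫ = -s) (y b : ι) :
    max 0 (s + ⟪c y, c b⟫) = if y = b then s + 1 else 0 := by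
  split_ifs with hyb
  · rw [hyb, real_inner_self_eq_norm_sq, hnorm, one_pow]
    exact max_eq_right (by linarith)
  · simp [hinner y b hyb]

theorem sum_one_sub_mul_max_zero_add_inner_codeword [Fintype ι] (ρ : ι → ℝ) (hs : 0 ≤ s)
    (hnorm : ∀ y, ‖c y‖ = 1) (hinner : ∀ y y', y ≠ y' → ⟪c y, c y'⟫ = -s) (b : ι) :
    ∑ y, (1 - ρ y) * max 0 (s + ⟪c y, c b⟫) = (1 - ρ b) * (s + 1) := by
  classical
  simp [max_zero_add_inner_eq_ite hs hnorm hinner]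

end Codewords

/-- pointwise comparison inequality for the simplex cone SVM loss, with
constant `T - 1` and exponent `1`: if `b` maximizes `ρ`, `C` is the SC-SVM conditional
risk, and `D α` is any label maximizing `y ↦ ⟪c y, α⟫`, then
`ρ b - ρ (D α) ≤ (T-1) (C α - C (c b))`. -/
theorem simplex_cone_svm_pointwise_comparison (T : ℕ) (hT : 2 ≤ T)
    (c : Fin T → EuclideanSpace ℝ (Fin (T - 1)))
    (hnorm : ∀ y, ‖c y‖ = 1)
    (hinner : ∀ y y', y ≠ y' → ⟪c y, c y'⟫ = -(1 / ((T : ℝ) - 1)))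
    (hsum : ∑ y, c y = 0)
    (ρ : Fin T → ℝ) (hρ : ∀ y, 0 ≤ ρ y) (hρsum : ∑ y, ρ y = 1)
    (b : Fin T) (hb : ∀ y, ρ y ≤ ρ b)
    (C : EuclideanSpace ℝ (Fin (T - 1)) → ℝ)
    (hC : ∀ α, C α = ∑ y, ρ y *
      ∑ y' ∈ Finset.univ.erase y, max 0 (1 / ((T : ℝ) - 1) + ⟪c y', α⟫))
    (α : EuclideanSpace ℝ (Fin (T - 1)))
    (D : Fin T) (hD : ∀ y, ⟪c y, α⟫ ≤ ⟪c D, α⟫) :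
    ρ b - ρ D ≤ ((T : ℝ) - 1) * (C α - C (c b)) := by
  set s := 1 / ((T : ℝ) - 1) with hs
  have hT1 : (0 : ℝ) < T - 1 := by
    have : (2 : ℝ) ≤ T := by exact_mod_cast hT
    linarith
  have hTs : (T : ℝ) * s = s + 1 := by rw [hs]; field_simp; ring
  have hrisk : ∀ β, C β = ∑ y, (1 - ρ y) * max 0 (s + ⟪c y, β⟫) := fun β =>
    (hC β).trans (sum_mul_sum_erase_of_sum_eq_one ρ _ hρsum)
  have hρb : ρ b ≤ 1 := hρsum ▸ single_le_sum (fun y _ => hρ y) (mem_univ b)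
  have hscores : ∑ y, ⟪c y, α⟫ = 0 := by rw [← sum_inner, hsum, inner_zero_left]
  have hCα := le_sum_one_sub_mul_max_zero_add (s := s) hscores hb hρb hD
  have hCb := sum_one_sub_mul_max_zero_add_inner_codeword ρ (by positivity) hnorm hinner b
  rw [Fintype.card_fin, hTs] at hCα
  calc ρ b - ρ D = ((T : ℝ) - 1) * ((ρ b - ρ D) * s) := by rw [hs]; field_simp
    _ ≤ ((T : ℝ) - 1) * (C α - C (c b)) := by
      rw [hrisk, hrisk, hCb]
      gcongr
      linarith
end

section
/- Let (X, μ) be a measurable space with a probability measure, c_1, …, c_T a simplex coding in ℝ^{T−1}, T ≥ 2, ρ_1, …, ρ_T : X → [0,1] measurable with ∑_y ρ_y(x) = 1, D a measurable decoding map, f_ρ(x) = ∑_y ρ_y(x) c_y, R(g) = ∫ (1 − ρ_{g(x)}(x)) dμ, and E(f) = ∫ ∑_y ρ_y(x) ‖c_y − f(x)‖² dμ. Fix q > 0 and B_q > 0 and assume the multiclass noise condition: for all s ∈ [0,1], μ({x ∈ X : min_{j ≠ D(f_ρ(x))} ((T−1)/T) ⟨c_{D(f_ρ(x))} − c_j,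 f_ρ(x)⟩ ≤ s}) ≤ B_q s^q. Then for every measurable f : X → ℝ^{T−1} with ∫ ‖f‖² dμ < ∞: R(D∘f) − R(D∘f_ρ) ≤ K · ((2(T−1)/T)(E(f) − E(f_ρ)))^{(q+1)/(q+2)}, where K = (2 √(B_q + 1))^{(2q+2)/(q+2)}. -/
/-!
The pointwise excess risk `Δ = ρ_{D f_ρ} - ρ_{D f}` equals `((T-1)/T) ⟪c_{D f_ρ} - c_{D f}, f_ρ⟫`.
Since `D f` maximises `⟪c_·, f⟫`, this is at most `‖c_{D f_ρ} - c_{D f}‖ ‖f - f_ρ‖`, so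
`Δ² ≤ g := 2 ((T-1)/T) ‖f - f_ρ‖²`, and by the bias-variance identity `∫ g` is the factor
`(2(T-1)/T)(E f - E f_ρ)`. Where the margin exceeds a threshold `t` we have `Δ > t`, hence
`Δ ≤ g / t`; elsewhere `Δ ≤ g / (2ε) + ε / 2`, and the noise condition bounds the measure of that
set by `B t^q`. Taking `t^(q+2) = ∫ g` and `ε = t / √B` gives `∫ Δ ≤ (1 + √B) (∫ g)^((q+1)/(q+2))`.
-/

open scoped RealInnerProductSpace
open MeasureTheory

section InnerProduct

variable {E : Type*} [NormedAddCommGroup E] [InnerProductSpace ℝ E]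

lemma inner_sq_le_of_inner_nonpos {u α β : E} (hα : 0 ≤ ⟪u, α⟫) (hβ : ⟪u, β⟫ ≤ 0) :
    ⟪u, α⟫ ^ 2 ≤ ‖u‖ ^ 2 * ‖α - β‖ ^ 2 := by
  have : ⟪u, α⟫ ≤ ‖u‖ * ‖α - β‖ := calc
    ⟪u, α⟫ ≤ ⟪u, α - β⟫ := by rw [inner_sub_right]; linarith
    _ ≤ ‖u‖ * ‖α - β‖ := real_inner_le_norm _ _
  rw [← mul_pow]
  exact pow_le_pow_left₀ hα this 2

lemma sum_mul_norm_sub_sq_eq {ι : Type*} [Fintype ι] {w : ι → ℝ} (hw : ∑ i, w i = 1)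
    (c : ι → E) (v : E) :
    ∑ i, w i * ‖c i - v‖ ^ 2 =
      ∑ i, w i * ‖c i - ∑ j, w j • c j‖ ^ 2 + ‖v - ∑ j, w j • c j‖ ^ 2 := by
  set α := ∑ j, w j • c j
  have hsplit : ∀ i, ‖c i - v‖ ^ 2 = ‖c i - α‖ ^ 2 + 2 * ⟪c i - α, α - v⟫ + ‖v - α‖ ^ 2 := by
    intro i
    rw [← norm_sub_rev α v, ← norm_add_sq_real, sub_add_sub_cancel]
  have hcentered : ∑ i, w i * ⟪c i - α, α - v⟫ = 0 := by
    simp_rw [← real_inner_smul_left, ← sum_inner, smul_sub, Finset.sum_sub_distrib,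
      ← Finset.sum_smul, hw, one_smul]
    rw [sub_self, inner_zero_left]
  simp_rw [hsplit, mul_add, Finset.sum_add_distrib, ← Finset.sum_mul, hw, one_mul,
    mul_left_comm _ (2 : ℝ), ← Finset.mul_sum, hcentered, mul_zero, add_zero]

end InnerProduct

lemma simplex_scale_pos {T : ℕ} (hT : 2 ≤ T) : 0 < ((T : ℝ) - 1) / T :=
  div_pos (sub_pos.2 (Nat.one_lt_cast.2 hT)) (Nat.cast_pos.2 (by omega))

section SimplexCoding

variable {E : Type*} [NormedAddCommGroup E] [InnerProductSpace ℝ E] {T : ℕ} {c : Fin T → E}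

lemma inner_simplex_sum (hT : 2 ≤ T) (hnorm : ∀ y, ‖c y‖ = 1)
    (hinner : ∀ y y', y ≠ y' → ⟪c y, c y'⟫ = -(1 / ((T : ℝ) - 1)))
    {w : Fin T → ℝ} (hw : ∑ y, w y = 1) (y : Fin T) :
    ⟪c y, ∑ y', w y' • c y'⟫ = ((T : ℝ) * w y - 1) / ((T : ℝ) - 1) := by
  have hT1 : (T : ℝ) - 1 ≠ 0 := (sub_pos.2 (Nat.one_lt_cast.2 hT)).ne'
  have hoff : ∀ y' ∈ Finset.univ.erase y, ⟪c y, w y' • c y'⟫ = w y' * -(1 / ((T : ℝ) - 1)) :=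
    fun y' hy' => by rw [real_inner_smul_right, hinner y y' (Finset.ne_of_mem_erase hy').symm]
  rw [inner_sum, ← Finset.add_sum_erase _ _ (Finset.mem_univ y), Finset.sum_congr rfl hoff,
    ← Finset.sum_mul, Finset.sum_erase_eq_sub (Finset.mem_univ y), hw, real_inner_smul_right,
    real_inner_self_eq_norm_sq, hnorm]
  field_simp
  ring

lemma mul_inner_sub_simplex_sum (hT : 2 ≤ T) (hnorm : ∀ y, ‖c y‖ = 1)
    (hinner : ∀ y y', y ≠ y' → ⟪c y, c y'⟫ = -(1 / ((T : ℝ) - 1)))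
    {w : Fin T → ℝ} (hw : ∑ y, w y = 1) (y y' : Fin T) :
    ((T : ℝ) - 1) / T * ⟪c y - c y', ∑ y'', w y'' • c y''⟫ = w y - w y' := by
  have hT1 : (T : ℝ) - 1 ≠ 0 := (sub_pos.2 (Nat.one_lt_cast.2 hT)).ne'
  have hT0 : (T : ℝ) ≠ 0 := by positivity
  rw [inner_sub_left, inner_simplex_sum hT hnorm hinner hw, inner_simplex_sum hT hnorm hinner hw]
  field_simp
  ring

lemma mul_norm_sub_sq_le (hT : 2 ≤ T) (hnorm : ∀ y, ‖c y‖ = 1)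
    (hinner : ∀ y y', y ≠ y' → ⟪c y, c y'⟫ = -(1 / ((T : ℝ) - 1))) (y y' : Fin T) :
    ((T : ℝ) - 1) / T * ‖c y - c y'‖ ^ 2 ≤ 2 := by
  rcases eq_or_ne y y' with rfl | h
  · simp
  have hT1 : (T : ℝ) - 1 ≠ 0 := (sub_pos.2 (Nat.one_lt_cast.2 hT)).ne'
  have hT0 : (T : ℝ) ≠ 0 := by positivity
  refine le_of_eq ?_
  rw [norm_sub_sq_real, hnorm, hnorm, hinner y y' h]
  field_simp
  ring

lemma sub_nonneg_of_inner_le (hT : 2 ≤ T) (hnorm : ∀ y, ‖c y‖ = 1)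
    (hinner : ∀ y y', y ≠ y' → ⟪c y, c y'⟫ = -(1 / ((T : ℝ) - 1)))
    {w : Fin T → ℝ} (hw : ∑ y, w y = 1) {α : E} (hα : α = ∑ y, w y • c y) {a b : Fin T}
    (hab : ⟪c b, α⟫ ≤ ⟪c a, α⟫) : 0 ≤ w a - w b := by
  rw [← mul_inner_sub_simplex_sum hT hnorm hinner hw, ← hα]
  exact mul_nonneg (simplex_scale_pos hT).le (by rw [inner_sub_left]; linarith)

lemma sq_sub_le_of_inner_le (hT : 2 ≤ T) (hnorm : ∀ y, ‖c y‖ = 1)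
    (hinner : ∀ y y', y ≠ y' → ⟪c y, c y'⟫ = -(1 / ((T : ℝ) - 1)))
    {w : Fin T → ℝ} (hw : ∑ y, w y = 1) {α : E} (hα : α = ∑ y, w y • c y) {a b : Fin T} {β : E}
    (hab : ⟪c b, α⟫ ≤ ⟪c a, α⟫) (hba : ⟪c a, β⟫ ≤ ⟪c b, β⟫) :
    (w a - w b) ^ 2 ≤ 2 * (((T : ℝ) - 1) / T) * ‖β - α‖ ^ 2 := by
  set κ := ((T : ℝ) - 1) / T
  have hκ : 0 ≤ κ := (simplex_scale_pos hT).le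
  have hinner_sq : ⟪c a - c b, α⟫ ^ 2 ≤ ‖c a - c b‖ ^ 2 * ‖α - β‖ ^ 2 :=
    inner_sq_le_of_inner_nonpos (by rw [inner_sub_left]; linarith)
      (by rw [inner_sub_left]; linarith)
  calc (w a - w b) ^ 2 = κ ^ 2 * ⟪c a - c b, α⟫ ^ 2 := by
        rw [← mul_inner_sub_simplex_sum hT hnorm hinner hw, ← hα]; ring
    _ ≤ κ ^ 2 * (‖c a - c b‖ ^ 2 * ‖α - β‖ ^ 2) := by gcongr
    _ = κ * (κ * ‖c a - c b‖ ^ 2) * ‖β - α‖ ^ 2 := by rw [norm_sub_rev α]; ring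
    _ ≤ κ * 2 * ‖β - α‖ ^ 2 := by gcongr; exact mul_norm_sub_sq_le hT hnorm hinner a b
    _ = 2 * κ * ‖β - α‖ ^ 2 := by ring

end SimplexCoding

lemma norm_sum_smul_le_one {E ι : Type*} [SeminormedAddCommGroup E] [NormedSpace ℝ E]
    [Fintype ι] {w : ι → ℝ} (hw0 : ∀ i, 0 ≤ w i) (hw : ∑ i, w i = 1) {c : ι → E}
    (hc : ∀ i, ‖c i‖ ≤ 1) : ‖∑ i, w i • c i‖ ≤ 1 := by
  simpa using (convex_closedBall (0 : E) 1).sum_mem (fun i _ => hw0 i) hw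
    (fun i _ => mem_closedBall_zero_iff.2 (hc i))

lemma measurable_countable_apply {X ι Y Z : Type*} [MeasurableSpace X] [MeasurableSpace ι]
    [Countable ι] [MeasurableSingletonClass ι] [MeasurableSpace Y] [MeasurableSpace Z]
    {F : ι → Y → Z} (hF : ∀ i, Measurable (F i)) {k : X → ι} {h : X → Y}
    (hk : Measurable k) (hh : Measurable h) : Measurable fun x => F (k x) (h x) :=
  (measurable_from_prod_countable_right (f := fun p : ι × Y => F p.1 p.2) hF).comp
    (hk.prodMk hh)

section Margin

variable {X : Type*} {Δ g m : X → ℝ}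

lemma le_mul_add_indicator_of_sq_le {t ε : ℝ} (ht : 0 < t) (hε : 0 < ε) {x : X}
    (hΔ0 : 0 ≤ Δ x) (hΔg : Δ x ^ 2 ≤ g x) (hmΔ : 0 < Δ x → m x ≤ Δ x) :
    Δ x ≤ (t⁻¹ + (2 * ε)⁻¹) * g x + {x | m x ≤ t}.indicator (fun _ => ε / 2) x := by
  have hg : 0 ≤ g x := (sq_nonneg _).trans hΔg
  have htg : 0 ≤ t⁻¹ * g x := by positivity
  have hεg : 0 ≤ (2 * ε)⁻¹ * g x := by positivity
  by_cases hm : m x ≤ t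
  · rw [Set.indicator_of_mem (show x ∈ {x | m x ≤ t} from hm)]
    -- AM-GM: `2 ε Δ ≤ Δ² + ε²`
    have : Δ x ≤ (2 * ε)⁻¹ * g x + ε / 2 := by
      rw [inv_mul_eq_div, div_add' _ _ _ (by positivity), le_div_iff₀ (by positivity)]
      nlinarith [sq_nonneg (Δ x - ε)]
    linarith
  · rw [Set.indicator_of_notMem (show x ∉ {x | m x ≤ t} from hm), add_zero]
    rcases hΔ0.eq_or_lt with h | h
    · rw [← h]; positivity
    · have htΔ : t < Δ x := (not_le.1 hm).trans_le (hmΔ h)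
      have : Δ x ≤ t⁻¹ * g x := by
        rw [inv_mul_eq_div, le_div_iff₀ ht]; nlinarith
      linarith

variable [MeasurableSpace X] {μ : Measure X}

lemma integral_le_of_margin [IsFiniteMeasure μ] {q B t ε : ℝ} (hB : 0 ≤ B) (ht0 : 0 < t)
    (ht1 : t ≤ 1) (hε : 0 < ε) (hΔ0 : ∀ x, 0 ≤ Δ x) (hΔg : ∀ x, Δ x ^ 2 ≤ g x)
    (hg : Integrable g μ) (hm : Measurable m) (hmΔ : ∀ x, 0 < Δ x → m x ≤ Δ x)
    (hnoise : ∀ s ∈ Set.Icc (0 : ℝ) 1, μ {x | m x ≤ s} ≤ ENNReal.ofReal (B * s ^ q)) :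
    ∫ x, Δ x ∂μ ≤ (t⁻¹ + (2 * ε)⁻¹) * ∫ x, g x ∂μ + ε / 2 * (B * t ^ q) := by
  have hA : MeasurableSet {x | m x ≤ t} := measurableSet_le hm measurable_const
  have hμA : μ.real {x | m x ≤ t} ≤ B * t ^ q :=
    ENNReal.toReal_le_of_le_ofReal (by positivity) (hnoise t ⟨ht0.le, ht1⟩)
  calc ∫ x, Δ x ∂μ
      ≤ ∫ x, ((t⁻¹ + (2 * ε)⁻¹) * g x + {x | m x ≤ t}.indicator (fun _ => ε / 2) x) ∂μ :=
        integral_mono_of_nonneg (ae_of_all _ hΔ0)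
          ((hg.const_mul _).add ((integrable_const _).indicator hA))
          (ae_of_all _ fun x => le_mul_add_indicator_of_sq_le ht0 hε (hΔ0 x) (hΔg x) (hmΔ x))
    _ = (t⁻¹ + (2 * ε)⁻¹) * ∫ x, g x ∂μ + μ.real {x | m x ≤ t} * (ε / 2) := by
        rw [integral_add (hg.const_mul _) ((integrable_const _).indicator hA),
          integral_const_mul, integral_indicator_const _ hA, smul_eq_mul]
    _ ≤ (t⁻¹ + (2 * ε)⁻¹) * ∫ x, g x ∂μ + ε / 2 * (B * t ^ q) := by nlinarith

lemma inv_add_inv_mul_rpow_add_two {q B t : ℝ} (hB : 0 < B) (ht : 0 < t) :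
    (t⁻¹ + (2 * (t / √B))⁻¹) * t ^ (q + 2) + t / √B / 2 * (B * t ^ q) =
      (1 + √B) * t ^ (q + 1) := by
  have hs : √B ^ 2 = B := Real.sq_sqrt hB.le
  have hs0 : 0 < √B := Real.sqrt_pos.2 hB
  rw [Real.rpow_add ht, Real.rpow_add ht, Real.rpow_two, Real.rpow_one]
  generalize √B = s at hs hs0 ⊢
  subst hs
  field_simp
  ring

lemma one_add_sqrt_le_rpow {q B : ℝ} (hq : 0 ≤ q) (hB : 0 ≤ B) :
    1 + √B ≤ (2 * √(B + 1)) ^ ((2 * q + 2) / (q + 2)) := calc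
  1 + √B ≤ 2 * √(B + 1) := by
    have h1 : 1 ≤ √(B + 1) := Real.one_le_sqrt.2 (by linarith)
    have h2 : √B ≤ √(B + 1) := Real.sqrt_le_sqrt (by linarith)
    linarith
  _ = (2 * √(B + 1)) ^ (1 : ℝ) := (Real.rpow_one _).symm
  _ ≤ (2 * √(B + 1)) ^ ((2 * q + 2) / (q + 2)) := by
    refine Real.rpow_le_rpow_of_exponent_le ?_ ?_
    · linarith [Real.one_le_sqrt.2 (by linarith : (1 : ℝ) ≤ B + 1)]
    · rw [le_div_iff₀ (by linarith)]; linarith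

theorem integral_le_rpow_of_margin [IsProbabilityMeasure μ] {q B : ℝ} (hq : 0 ≤ q)
    (hB : 0 < B) (hΔ0 : ∀ x, 0 ≤ Δ x) (hΔ1 : ∀ x, Δ x ≤ 1) (hΔg : ∀ x, Δ x ^ 2 ≤ g x)
    (hg : Integrable g μ) (hm : Measurable m) (hmΔ : ∀ x, 0 < Δ x → m x ≤ Δ x)
    (hnoise : ∀ s ∈ Set.Icc (0 : ℝ) 1, μ {x | m x ≤ s} ≤ ENNReal.ofReal (B * s ^ q)) :
    ∫ x, Δ x ∂μ ≤
      (2 * √(B + 1)) ^ ((2 * q + 2) / (q + 2)) * (∫ x, g x ∂μ) ^ ((q + 1) / (q + 2)) := by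
  set K := (2 * √(B + 1)) ^ ((2 * q + 2) / (q + 2))
  set I := ∫ x, g x ∂μ
  have hK : 1 + √B ≤ K := one_add_sqrt_le_rpow hq hB.le
  have hq2 : 0 < q + 2 := by linarith
  have hexp : 0 < (q + 1) / (q + 2) := by positivity
  have hg0 : ∀ x, 0 ≤ g x := fun x => (sq_nonneg _).trans (hΔg x)
  rcases (integral_nonneg hg0 : 0 ≤ I).eq_or_lt with hI | hI
  · have hΔ : Δ =ᵐ[μ] 0 := by
      filter_upwards [(integral_eq_zero_iff_of_nonneg hg0 hg).1 hI.symm] with x hx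
      exact pow_eq_zero_iff two_ne_zero |>.1 (le_antisymm ((hΔg x).trans_eq hx) (sq_nonneg _))
    rw [integral_congr_ae hΔ, show I = 0 from hI.symm, Real.zero_rpow hexp.ne']
    simp
  rcases le_or_gt 1 I with hI1 | hI1
  · calc ∫ x, Δ x ∂μ ≤ ∫ _, (1 : ℝ) ∂μ :=
          integral_mono_of_nonneg (ae_of_all _ hΔ0) (integrable_const 1) (ae_of_all _ hΔ1)
      _ = 1 := by simp
      _ ≤ I ^ ((q + 1) / (q + 2)) := Real.one_le_rpow hI1 hexp.le
      _ ≤ K * I ^ ((q + 1) / (q + 2)) :=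
          le_mul_of_one_le_left (by positivity) (by linarith [Real.sqrt_nonneg B])
  -- `t ^ (q + 2) = I` balances the two error terms of `integral_le_of_margin`
  set t := I ^ (q + 2)⁻¹
  have ht0 : 0 < t := Real.rpow_pos_of_pos hI _
  have htI : t ^ (q + 2) = I := Real.rpow_inv_rpow hI.le hq2.ne'
  have htI' : t ^ (q + 1) = I ^ ((q + 1) / (q + 2)) := by
    rw [← Real.rpow_mul hI.le, inv_mul_eq_div]
  calc ∫ x, Δ x ∂μ ≤ (t⁻¹ + (2 * (t / √B))⁻¹) * I + t / √B / 2 * (B * t ^ q) :=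
        integral_le_of_margin hB.le ht0 (Real.rpow_le_one hI.le hI1.le (by positivity))
          (by positivity) hΔ0 hΔg hg hm hmΔ hnoise
    _ = (1 + √B) * I ^ ((q + 1) / (q + 2)) := by
        rw [← htI', ← inv_add_inv_mul_rpow_add_two hB ht0, htI]
    _ ≤ K * I ^ ((q + 1) / (q + 2)) := by gcongr

end Margin

section Risk

variable {X ι : Type*} [MeasurableSpace X] {μ : Measure X} [IsFiniteMeasure μ] {ρ : ι → X → ℝ}

lemma integrable_apply_comp [MeasurableSpace ι] [Countable ι] [MeasurableSingletonClass ι]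
    (hρ : ∀ i, Measurable (ρ i)) (hρ0 : ∀ i x, 0 ≤ ρ i x) (hρ1 : ∀ i x, ρ i x ≤ 1)
    {k : X → ι} (hk : Measurable k) : Integrable (fun x => ρ (k x) x) μ :=
  .of_bound (measurable_countable_apply hρ hk measurable_id).aestronglyMeasurable 1
    (ae_of_all _ fun x => by rw [Real.norm_of_nonneg (hρ0 _ _)]; exact hρ1 _ _)

lemma integral_one_sub_sub_integral_one_sub [MeasurableSpace ι] [Countable ι]
    [MeasurableSingletonClass ι] (hρ : ∀ i, Measurable (ρ i)) (hρ0 : ∀ i x, 0 ≤ ρ i x)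
    (hρ1 : ∀ i x, ρ i x ≤ 1) {k k' : X → ι} (hk : Measurable k) (hk' : Measurable k') :
    ∫ x, (1 - ρ (k x) x) ∂μ - ∫ x, (1 - ρ (k' x) x) ∂μ = ∫ x, (ρ (k' x) x - ρ (k x) x) ∂μ := by
  have h : Integrable (fun x => 1 - ρ (k x) x) μ :=
    (integrable_const 1).sub (integrable_apply_comp hρ hρ0 hρ1 hk)
  have h' : Integrable (fun x => 1 - ρ (k' x) x) μ :=
    (integrable_const 1).sub (integrable_apply_comp hρ hρ0 hρ1 hk')
  rw [← integral_sub h h']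
  simp_rw [sub_sub_sub_cancel_left]

lemma integrable_norm_sub_sq {E : Type*} [NormedAddCommGroup E] [MeasurableSpace E]
    [OpensMeasurableSpace E] [SecondCountableTopology E] {f α : X → E} (hf : Measurable f)
    (hf2 : Integrable (fun x => ‖f x‖ ^ 2) μ) (hα : Measurable α) {C : ℝ}
    (hαC : ∀ x, ‖α x‖ ≤ C) : Integrable (fun x => ‖f x - α x‖ ^ 2) μ := by
  have hfL2 : MemLp f 2 μ := (memLp_two_iff_integrable_sq_norm hf.aestronglyMeasurable).2 hf2
  have hαL2 : MemLp α 2 μ := .of_bound hα.aestronglyMeasurable C (ae_of_all _ hαC)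
  exact (memLp_two_iff_integrable_sq_norm (hfL2.sub hαL2).1).1 (hfL2.sub hαL2)

lemma integral_sum_mul_norm_sub_sq_sub {E : Type*} [NormedAddCommGroup E] [InnerProductSpace ℝ E]
    [MeasurableSpace E] [BorelSpace E] [Fintype ι] (hρ : ∀ i, Measurable (ρ i))
    (hρ0 : ∀ i x, 0 ≤ ρ i x) (hρsum : ∀ x, ∑ i, ρ i x = 1) {c : ι → E} (hc : ∀ i, ‖c i‖ ≤ 1)
    {f α : X → E} (hα : ∀ x, α x = ∑ i, ρ i x • c i) (hαm : Measurable α)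
    (hfα : Integrable (fun x => ‖f x - α x‖ ^ 2) μ) :
    ∫ x, ∑ i, ρ i x * ‖c i - f x‖ ^ 2 ∂μ - ∫ x, ∑ i, ρ i x * ‖c i - α x‖ ^ 2 ∂μ =
      ∫ x, ‖f x - α x‖ ^ 2 ∂μ := by
  have hvar : ∀ x v, ∑ i, ρ i x * ‖c i - v‖ ^ 2 =
      ∑ i, ρ i x * ‖c i - α x‖ ^ 2 + ‖v - α x‖ ^ 2 := fun x v => by
    rw [hα]; exact sum_mul_norm_sub_sq_eq (hρsum x) c v
  have hvar_int : Integrable (fun x => ∑ i, ρ i x * ‖c i - α x‖ ^ 2) μ := by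
    refine .of_bound (by fun_prop : Measurable _).aestronglyMeasurable 1
      (ae_of_all _ fun x => ?_)
    have hmoment : ∑ i, ρ i x * ‖c i - 0‖ ^ 2 ≤ 1 := calc
      ∑ i, ρ i x * ‖c i - 0‖ ^ 2 ≤ ∑ i, ρ i x := Finset.sum_le_sum fun i _ =>
          mul_le_of_le_one_right (hρ0 i x) (by simpa using hc i)
      _ = 1 := hρsum x
    have hnonneg : 0 ≤ ∑ i, ρ i x * ‖c i - α x‖ ^ 2 :=
      Finset.sum_nonneg fun i _ => mul_nonneg (hρ0 i x) (sq_nonneg _)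
    rw [Real.norm_of_nonneg hnonneg]
    linarith [hvar x 0, sq_nonneg ‖0 - α x‖]
  rw [show (fun x => ∑ i, ρ i x * ‖c i - f x‖ ^ 2) = fun x =>
      ∑ i, ρ i x * ‖c i - α x‖ ^ 2 + ‖f x - α x‖ ^ 2 from funext fun x => hvar x (f x),
    integral_add hvar_int hfα]
  ring

end Risk

theorem simplex_ls_comparison_inequality_noise_general
    {X : Type*} [MeasurableSpace X] (μ : Measure X) [IsProbabilityMeasure μ]
    (T : ℕ) (hT : 2 ≤ T)
    (c : Fin T → EuclideanSpace ℝ (Fin (T - 1)))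
    (hnorm : ∀ y, ‖c y‖ = 1)
    (hinner : ∀ y y', y ≠ y' → ⟪c y, c y'⟫ = -(1 / ((T : ℝ) - 1)))
    (ρ : Fin T → X → ℝ) (hρmeas : ∀ y, Measurable (ρ y))
    (hρ0 : ∀ y x, 0 ≤ ρ y x) (hρ1 : ∀ y x, ρ y x ≤ 1)
    (hρsum : ∀ x, ∑ y, ρ y x = 1)
    (D : EuclideanSpace ℝ (Fin (T - 1)) → Fin T) (hDmeas : Measurable D)
    (hD : ∀ α y, ⟪c y, α⟫ ≤ ⟪c (D α), α⟫)
    (fρ : X → EuclideanSpace ℝ (Fin (T - 1))) (hfρ : ∀ x, fρ x = ∑ y, ρ y x • c y)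
    (R : (X → Fin T) → ℝ) (hR : ∀ g : X → Fin T, R g = ∫ x, (1 - ρ (g x) x) ∂μ)
    (E : (X → EuclideanSpace ℝ (Fin (T - 1))) → ℝ)
    (hE : ∀ f : X → EuclideanSpace ℝ (Fin (T - 1)),
      E f = ∫ x, ∑ y, ρ y x * ‖c y - f x‖ ^ 2 ∂μ)
    (q Bq : ℝ) (hq : 0 < q) (hBq : 0 < Bq)
    (hnoise : ∀ s ∈ Set.Icc (0 : ℝ) 1,
      μ {x : X | (⨅ j : {j : Fin T // j ≠ D (fρ x)},
          ((T : ℝ) - 1) / T * ⟪c (D (fρ x)) - c (j : Fin T), fρ x⟫) ≤ s}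
        ≤ ENNReal.ofReal (Bq * s ^ q))
    (f : X → EuclideanSpace ℝ (Fin (T - 1))) (hfmeas : Measurable f)
    (hfint : Integrable (fun x => ‖f x‖ ^ 2) μ) :
    R (D ∘ f) - R (D ∘ fρ) ≤
      (2 * Real.sqrt (Bq + 1)) ^ ((2 * q + 2) / (q + 2)) *
        ((2 * ((T : ℝ) - 1) / T) * (E f - E fρ)) ^ ((q + 1) / (q + 2)) := by
  have hfρm : Measurable fρ := by rw [funext hfρ]; fun_prop
  have hfρ1 : ∀ x, ‖fρ x‖ ≤ 1 := fun x =>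
    hfρ x ▸ norm_sum_smul_le_one (hρ0 · x) (hρsum x) fun y => (hnorm y).le
  have hΔ : ∀ x, ((T : ℝ) - 1) / T * ⟪c (D (fρ x)) - c (D (f x)), fρ x⟫ =
      ρ (D (fρ x)) x - ρ (D (f x)) x := fun x => by
    rw [hfρ]; exact mul_inner_sub_simplex_sum hT hnorm hinner (hρsum x) _ _
  have hint := integrable_norm_sub_sq hfmeas hfint hfρm hfρ1
  rw [hR, hR, integral_one_sub_sub_integral_one_sub hρmeas hρ0 hρ1 (hDmeas.comp hfmeas)
    (hDmeas.comp hfρm), hE, hE, integral_sum_mul_norm_sub_sq_sub hρmeas hρ0 hρsum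
    (fun y => (hnorm y).le) hfρ hfρm hint, mul_div_assoc, ← integral_const_mul]
  simp only [Function.comp_apply]
  refine integral_le_rpow_of_margin hq.le hBq (fun x => ?_) (fun x => ?_) (fun x => ?_)
    (hint.const_mul _) ?_ (fun x hx => ?_) hnoise
  · exact sub_nonneg_of_inner_le hT hnorm hinner (hρsum x) (hfρ x) (hD _ _)
  · linarith [hρ1 (D (fρ x)) x, hρ0 (D (f x)) x]
  · exact sq_sub_le_of_inner_le hT hnorm hinner (hρsum x) (hfρ x) (hD _ _) (hD _ _)
  · exact measurable_countable_apply (F := fun a α => ⨅ j : {j : Fin T // j ≠ a},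
        ((T : ℝ) - 1) / T * ⟪c a - c j, α⟫) (fun a => .iInf fun j => by fun_prop)
      (hDmeas.comp hfρm) hfρm
  · have hne : D (f x) ≠ D (fρ x) := fun h => by rw [h, sub_self] at hx; exact hx.false
    rw [← hΔ]
    exact ciInf_le (Finite.bddBelow_range _) (⟨D (f x), hne⟩ : {j : Fin T // j ≠ D (fρ x)})

/-- improved comparison inequality for the simplex least squares loss under
the multiclass (Tsybakov-type) noise condition with parameters `q > 0`, `B_q > 0`:
if for all `s ∈ [0,1]`,
`μ {x : min_{j ≠ D(f_ρ x)} ((T-1)/T) ⟪c (D (f_ρ x)) - c j, f_ρ x⟫ ≤ s} ≤ B_q s^q`,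
then every measurable square-integrable `f` satisfies
`R (D∘f) - R (D∘f_ρ) ≤ K ((2(T-1)/T)(E f - E f_ρ))^{(q+1)/(q+2)}` with
`K = (2 √(B_q + 1))^{(2q+2)/(q+2)}`. -/
theorem simplex_ls_comparison_inequality_noise
    {X : Type*} [MeasurableSpace X] (μ : Measure X) [IsProbabilityMeasure μ]
    (T : ℕ) (hT : 2 ≤ T)
    (c : Fin T → EuclideanSpace ℝ (Fin (T - 1)))
    (hnorm : ∀ y, ‖c y‖ = 1)
    (hinner : ∀ y y', y ≠ y' → ⟪c y, c y'⟫ = -(1 / ((T : ℝ) - 1)))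
    (hsum : ∑ y, c y = 0)
    (ρ : Fin T → X → ℝ) (hρmeas : ∀ y, Measurable (ρ y))
    (hρ0 : ∀ y x, 0 ≤ ρ y x) (hρ1 : ∀ y x, ρ y x ≤ 1)
    (hρsum : ∀ x, ∑ y, ρ y x = 1)
    (D : EuclideanSpace ℝ (Fin (T - 1)) → Fin T) (hDmeas : Measurable D)
    (hD : ∀ α y, ⟪c y, α⟫ ≤ ⟪c (D α), α⟫)
    (fρ : X → EuclideanSpace ℝ (Fin (T - 1))) (hfρ : ∀ x, fρ x = ∑ y, ρ y x • c y)
    (R : (X → Fin T) → ℝ) (hR : ∀ g : X → Fin T, R g = ∫ x, (1 - ρ (g x) x) ∂μ)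
    (E : (X → EuclideanSpace ℝ (Fin (T - 1))) → ℝ)
    (hE : ∀ f : X → EuclideanSpace ℝ (Fin (T - 1)),
      E f = ∫ x, ∑ y, ρ y x * ‖c y - f x‖ ^ 2 ∂μ)
    (q Bq : ℝ) (hq : 0 < q) (hBq : 0 < Bq)
    (hnoise : ∀ s ∈ Set.Icc (0 : ℝ) 1,
      μ {x : X | (⨅ j : {j : Fin T // j ≠ D (fρ x)},
          ((T : ℝ) - 1) / T * ⟪c (D (fρ x)) - c (j : Fin T), fρ x⟫) ≤ s}
        ≤ ENNReal.ofReal (Bq * s ^ q))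
    (f : X → EuclideanSpace ℝ (Fin (T - 1))) (hfmeas : Measurable f)
    (hfint : Integrable (fun x => ‖f x‖ ^ 2) μ) :
    R (D ∘ f) - R (D ∘ fρ) ≤
      (2 * Real.sqrt (Bq + 1)) ^ ((2 * q + 2) / (q + 2)) *
        ((2 * ((T : ℝ) - 1) / T) * (E f - E fρ)) ^ ((q + 1) / (q + 2)) :=
  simplex_ls_comparison_inequality_noise_general μ T hT c hnorm hinner ρ hρmeas hρ0 hρ1 hρsum D
    hDmeas hD fρ hfρ R hR E hE q Bq hq hBq hnoise f hfmeas hfint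
end
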